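/- arXiv:2102.03509 — 3 statements merged into one kernel-verified Lean document; each statement's English description precedes it below -/
import Mathlib

section
/- If the coefficients α₀ < α₁ < ... < αₙ are strictly increasing and x is a real number with (α₀ - x)(αₙ - x) < 0, then the equation Bₙ(z) = x has a unique solution z in the open interval (0,1). -/
noncomputable def bernsteinPoly (n : ℕ) (α : ℕ → ℝ) (x : ℝ) : ℝ :=
  ∑ k ∈ Finset.range (n + 1), α k * (n.choose k : ℝ) * x ^ k * (1 - x) ^ (n - k)

/-! By de Casteljau's recurrence `B_{n+1}(α)(z) = (1 - z) B_n(α)(z) + z B_n(α ∘ succ)(z)`, and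
since `B_n(α ∘ succ)` dominates `B_n(α)` on `[0, 1]`, an induction on `n` shows that `B_n` is
strictly increasing on `[0, 1]` for `n ≥ 1`. Its endpoint values are `B_n(0) = α₀` and
`B_n(1) = αₙ`, and the hypothesis puts `x` strictly between them, so the intermediate value
theorem gives a root in `(0, 1)` and strict monotonicity makes it unique. -/

open Set

theorem StrictMonoOn.existsUnique_mem_Ioo_eq {α δ : Type*} [ConditionallyCompleteLinearOrder α]
    [TopologicalSpace α] [OrderTopology α] [DenselyOrdered α] [LinearOrder δ]
    [TopologicalSpace δ] [OrderClosedTopology δ] {f : α → δ} {a b : α} {y : δ}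
    (hf : StrictMonoOn f (Icc a b)) (hab : a ≤ b) (hcont : ContinuousOn f (Icc a b))
    (hy : y ∈ Ioo (f a) (f b)) :
    ∃! z, z ∈ Ioo a b ∧ f z = y := by
  obtain ⟨z, hz, rfl⟩ := intermediate_value_Ioo hab hcont hy
  exact ⟨z, ⟨hz, rfl⟩, fun w ⟨hw, hwz⟩ =>
    hf.injOn (Ioo_subset_Icc_self hw) (Ioo_subset_Icc_self hz) hwz⟩

section BernsteinPoly

variable {n : ℕ} {α β : ℕ → ℝ} {z : ℝ}

lemma bernsteinPoly_zero (α : ℕ → ℝ) (z : ℝ) : bernsteinPoly 0 α z = α 0 := by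
  simp [bernsteinPoly]

lemma bernsteinPoly_succ (n : ℕ) (α : ℕ → ℝ) (z : ℝ) :
    bernsteinPoly (n + 1) α z =
      (1 - z) * bernsteinPoly n α z + z * bernsteinPoly n (fun k => α (k + 1)) z := by
  have hlow : (1 - z) * bernsteinPoly n α z =
      ∑ k ∈ Finset.range (n + 2),
        α k * (n.choose k : ℝ) * z ^ k * (1 - z) ^ (n + 1 - k) := by
    rw [bernsteinPoly, Finset.mul_sum, Finset.sum_range_succ _ (n + 1), Nat.choose_succ_self]
    simp only [Nat.cast_zero, mul_zero, zero_mul, add_zero]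
    refine Finset.sum_congr rfl fun k hk => ?_
    rw [Nat.sub_add_comm (Nat.lt_succ_iff.mp (Finset.mem_range.mp hk)), pow_succ]
    ring
  have hhigh : z * bernsteinPoly n (fun k => α (k + 1)) z =
      ∑ k ∈ Finset.range (n + 1),
        α (k + 1) * (n.choose k : ℝ) * z ^ (k + 1) * (1 - z) ^ (n - k) := by
    rw [bernsteinPoly, Finset.mul_sum]
    exact Finset.sum_congr rfl fun k _ => by ring
  rw [hlow, hhigh, bernsteinPoly, Finset.sum_range_succ' _ (n + 1),
    Finset.sum_range_succ' _ (n + 1)]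
  simp only [Nat.choose_succ_succ, Nat.cast_add, Nat.add_sub_add_right, add_mul, mul_add,
    Finset.sum_add_distrib, Nat.choose_zero_right, Nat.succ_eq_add_one]
  ring

lemma bernsteinPoly_apply_zero (n : ℕ) (α : ℕ → ℝ) : bernsteinPoly n α 0 = α 0 := by
  induction n generalizing α with
  | zero => exact bernsteinPoly_zero α 0
  | succ n ih => simp [bernsteinPoly_succ, ih]

lemma bernsteinPoly_apply_one (n : ℕ) (α : ℕ → ℝ) : bernsteinPoly n α 1 = α n := by
  induction n generalizing α with
  | zero => exact bernsteinPoly_zero α 1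
  | succ n ih => simp [bernsteinPoly_succ, ih]

lemma continuous_bernsteinPoly (n : ℕ) (α : ℕ → ℝ) : Continuous (bernsteinPoly n α) := by
  unfold bernsteinPoly
  fun_prop

lemma bernsteinPoly_le_bernsteinPoly (h : ∀ k ≤ n, α k ≤ β k) (hz : z ∈ Icc 0 1) :
    bernsteinPoly n α z ≤ bernsteinPoly n β z := by
  have hz₀ : 0 ≤ z := hz.1
  have hz₁ : 0 ≤ 1 - z := sub_nonneg.mpr hz.2
  refine Finset.sum_le_sum fun k hk => ?_
  have hbasis : 0 ≤ (n.choose k : ℝ) * z ^ k * (1 - z) ^ (n - k) := by positivity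
  simpa only [mul_assoc] using
    mul_le_mul_of_nonneg_right (h k (Nat.lt_succ_iff.mp (Finset.mem_range.mp hk))) hbasis

lemma bernsteinPoly_strictMonoOn (hn : n ≠ 0) (hα : ∀ k < n, α k < α (k + 1)) :
    StrictMonoOn (bernsteinPoly n α) (Icc 0 1) := by
  obtain ⟨n, rfl⟩ := Nat.exists_eq_add_one_of_ne_zero hn
  induction n generalizing α with
  | zero =>
    intro a _ b _ hab
    have h01 := hα 0 one_pos
    simp only [bernsteinPoly_succ, bernsteinPoly_zero]
    nlinarith
  | succ n ih =>
    intro a ha b hb hab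
    set A := bernsteinPoly (n + 1) α
    set C := bernsteinPoly (n + 1) (fun k => α (k + 1))
    have hA : A a < A b := ih n.succ_ne_zero (fun k hk => hα k (by omega)) ha hb hab
    have hC : C a < C b := ih n.succ_ne_zero (fun k hk => hα (k + 1) (by omega)) ha hb hab
    have hAC : A a ≤ C a := bernsteinPoly_le_bernsteinPoly (fun k hk => (hα k (by omega)).le) ha
    have hb₀ : 0 < b := ha.1.trans_lt hab
    rw [bernsteinPoly_succ (n + 1) α a, bernsteinPoly_succ (n + 1) α b]
    -- the increment is `(1 - b) (A b - A a) + b (C b - C a) + (b - a) (C a - A a)`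
    nlinarith [mul_nonneg (sub_nonneg.mpr hb.2) (sub_nonneg.mpr hA.le),
      mul_pos hb₀ (sub_pos.mpr hC), mul_nonneg (sub_nonneg.mpr hab.le) (sub_nonneg.mpr hAC)]

end BernsteinPoly

theorem bernsteinPoly_unique_root (n : ℕ) (α : ℕ → ℝ)
    (hα : ∀ k, k < n → α k < α (k + 1)) (x : ℝ)
    (hx : (α 0 - x) * (α n - x) < 0) :
    ∃! z, z ∈ Set.Ioo (0 : ℝ) 1 ∧ bernsteinPoly n α z = x := by
  have hn : n ≠ 0 := by
    rintro rfl
    exact (mul_self_nonneg _).not_gt hx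
  have hmono := bernsteinPoly_strictMonoOn hn hα
  have hends : α 0 < α n := by
    simpa only [bernsteinPoly_apply_zero, bernsteinPoly_apply_one] using
      hmono (left_mem_Icc.mpr zero_le_one) (right_mem_Icc.mpr zero_le_one) zero_lt_one
  have hxα : x ∈ Ioo (α 0) (α n) := by
    rcases mul_neg_iff.mp hx with ⟨h₀, hₙ⟩ | ⟨h₀, hₙ⟩
    · exact absurd hends (by linarith)
    · exact ⟨by linarith, by linarith⟩
  refine hmono.existsUnique_mem_Ioo_eq zero_le_one (continuous_bernsteinPoly n α).continuousOn ?_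
  rwa [bernsteinPoly_apply_zero, bernsteinPoly_apply_one]
end

section
/- Let f : [0,1] → ℝ be twice continuously differentiable. Then for each fixed x ∈ [0,1], n·(Bₙ(f)(x) − f(x)) converges to x(1−x)·f''(x)/2 as n → ∞ (Voronovskaya's theorem). -/
/-!
Write `f = P + g`, where `P` is the second-order Taylor polynomial of `f` at `x` and
`g t = o((t - x) ^ 2)`. The Bernstein operator at `x` kills `t - x` and sends `(t - x) ^ 2`
to `x (1 - x) / n`, which produces the limit. For the remainder,
`|g t| ≤ ε (t - x) ^ 2 + C (t - x) ^ 4` on `[0, 1]` (near `x` by the little-o bound, away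
from `x` because `g` is bounded), and the fourth central moment of the Bernstein weights is
`O(1 / n ^ 2)`, so `n |Bₙ g (x)| ≤ ε / 4 + C / n`. The central moments come from the
falling-factorial moments `∑ₖ k(k-1)⋯(k-j+1) C(n,k) xᵏ (1-x)ⁿ⁻ᵏ = n(n-1)⋯(n-j+1) xʲ`.
-/

noncomputable def bernsteinApprox (f : ℝ → ℝ) (n : ℕ) (x : ℝ) : ℝ :=
  ∑ k ∈ Finset.range (n + 1),
    f ((k : ℝ) / n) * (n.choose k : ℝ) * x ^ k * (1 - x) ^ (n - k)

open Finset Polynomial Filter Topology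

theorem sum_descFactorial_mul_choose_mul_pow_mul_pow {R : Type*} [CommSemiring R]
    (n j : ℕ) (x y : R) :
    ∑ k ∈ range (n + 1), (k.descFactorial j : R) * n.choose k * x ^ k * y ^ (n - k) =
      n.descFactorial j * x ^ j * (x + y) ^ (n - j) := by
  rcases lt_or_ge n j with hnj | hjn
  · rw [Nat.descFactorial_eq_zero_iff_lt.2 hnj, Nat.cast_zero, zero_mul, zero_mul]
    refine sum_eq_zero fun k hk => ?_
    rw [Nat.descFactorial_eq_zero_iff_lt.2 (by grind), Nat.cast_zero]
    simp only [zero_mul]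
  obtain ⟨m, rfl⟩ := Nat.exists_eq_add_of_le hjn
  have hlow : ∀ k ∈ range j,
      (k.descFactorial j : R) * (j + m).choose k * x ^ k * y ^ (j + m - k) = 0 := fun k hk => by
    rw [Nat.descFactorial_eq_zero_iff_lt.2 (mem_range.1 hk), Nat.cast_zero]
    simp only [zero_mul]
  rw [add_assoc, sum_range_add, sum_eq_zero hlow, zero_add, Nat.add_sub_cancel_left, add_pow,
    mul_sum]
  refine sum_congr rfl fun i _ => ?_
  have hcoeff : (j + i).descFactorial j * (j + m).choose (j + i) =
      (j + m).descFactorial j * m.choose i := by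
    have := Nat.choose_mul (n := j + m) (k := j + i) (s := j) (Nat.le_add_right j i)
    simp only [Nat.add_sub_cancel_left] at this
    rw [Nat.descFactorial_eq_factorial_mul_choose, Nat.descFactorial_eq_factorial_mul_choose,
      mul_assoc, mul_comm ((j + i).choose j), this, mul_assoc]
  rw [Nat.add_sub_add_left, pow_add, ← Nat.cast_mul, hcoeff]
  push_cast
  ring

namespace bernsteinPolynomial

variable (R : Type*) [CommRing R]

theorem sum_descFactorial_mul (n j : ℕ) :
    ∑ ν ∈ range (n + 1), (ν.descFactorial j : R[X]) * bernsteinPolynomial R n ν =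
      (n.descFactorial j : R[X]) * X ^ j := by
  have h := sum_descFactorial_mul_choose_mul_pow_mul_pow n j (X : R[X]) (1 - X)
  rw [add_sub_cancel, one_pow, mul_one] at h
  simpa only [bernsteinPolynomial, mul_assoc] using h

theorem sum_sub_pow_four_mul (n : ℕ) :
    ∑ ν ∈ range (n + 1), (n • (X : R[X]) - ν) ^ 4 * bernsteinPolynomial R n ν =
      n • X * (1 - X) * (1 + 3 * ((n : R[X]) - 2) * X * (1 - X)) := by
  have h (j : ℕ) := sum_descFactorial_mul R n j
  simp only [← descPochhammer_eval_eq_descFactorial, descPochhammer_eval_eq_prod_range] at h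
  have h0 := h 0; have h1 := h 1; have h2 := h 2; have h3 := h 3; have h4 := h 4
  simp only [prod_range_succ, prod_range_zero, one_mul, Nat.cast_zero, sub_zero, Nat.cast_one,
    Nat.cast_ofNat, pow_zero, pow_one] at h0 h1 h2 h3 h4
  -- `(c - v) ^ 4` in the falling-factorial basis of `v`
  have hexpand : ∀ c v b : R[X], (c - v) ^ 4 * b =
      v * (v - 1) * (v - 2) * (v - 3) * b + (6 - 4 * c) * (v * (v - 1) * (v - 2) * b)
        + (7 - 12 * c + 6 * c ^ 2) * (v * (v - 1) * b)
        + (1 - 4 * c + 6 * c ^ 2 - 4 * c ^ 3) * (v * b) + c ^ 4 * b := fun c v b => by ring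
  simp only [hexpand, sum_add_distrib, ← mul_sum, h0, h1, h2, h3, h4, nsmul_eq_mul]
  ring

theorem sum_eval (n : ℕ) (x : R) :
    ∑ k ∈ range (n + 1), (bernsteinPolynomial R n k).eval x = 1 := by
  simpa [eval_finsetSum] using congrArg (eval x) (sum R n)

theorem eval_nonneg {n ν : ℕ} {x : ℝ} (hx : x ∈ Set.Icc 0 1) :
    0 ≤ (bernsteinPolynomial ℝ n ν).eval x :=
  bernstein_nonneg (x := ⟨x, hx⟩)

theorem sum_div_sub_mul_eval {n : ℕ} (hn : n ≠ 0) (x : ℝ) :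
    ∑ k ∈ range (n + 1), ((k : ℝ) / n - x) * (bernsteinPolynomial ℝ n k).eval x = 0 := by
  have h := congrArg (eval x) (sum_smul ℝ n)
  simp only [eval_finsetSum, nsmul_eq_mul, eval_mul, eval_natCast, eval_X] at h
  simp only [sub_mul, sum_sub_distrib, div_mul_eq_mul_div, ← sum_div, h, ← mul_sum, sum_eval]
  field_simp
  ring

theorem sum_div_sub_sq_mul_eval {n : ℕ} (hn : n ≠ 0) (x : ℝ) :
    ∑ k ∈ range (n + 1), ((k : ℝ) / n - x) ^ 2 * (bernsteinPolynomial ℝ n k).eval x =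
      x * (1 - x) / n := by
  have h := congrArg (eval x) (variance ℝ n)
  simp only [eval_finsetSum, eval_mul, eval_pow, eval_sub, eval_X, eval_natCast, eval_one,
    nsmul_eq_mul] at h
  have hscale : ∀ k : ℕ, ((k : ℝ) / n - x) ^ 2 = (n * x - k) ^ 2 / n ^ 2 := fun k => by
    field_simp; ring
  simp only [hscale, div_mul_eq_mul_div, ← sum_div, h]
  field_simp

theorem sum_div_sub_pow_four_mul_eval_le {n : ℕ} (hn : n ≠ 0) {x : ℝ} (hx : x ∈ Set.Icc 0 1) :
    ∑ k ∈ range (n + 1), ((k : ℝ) / n - x) ^ 4 * (bernsteinPolynomial ℝ n k).eval x ≤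
      1 / n ^ 2 := by
  have h := congrArg (eval x) (sum_sub_pow_four_mul ℝ n)
  simp only [eval_finsetSum, eval_mul, eval_pow, eval_sub, eval_add, eval_X, eval_natCast,
    eval_one, eval_ofNat, nsmul_eq_mul] at h
  have hscale : ∀ k : ℕ, ((k : ℝ) / n - x) ^ 4 = (n * x - k) ^ 4 / n ^ 4 := fun k => by
    field_simp; ring
  simp only [hscale, div_mul_eq_mul_div, ← sum_div, h]
  have hn1 : (1 : ℝ) ≤ n := by exact_mod_cast Nat.one_le_iff_ne_zero.2 hn
  have ht0 : 0 ≤ x * (1 - x) := mul_nonneg hx.1 (sub_nonneg.2 hx.2)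
  have ht : x * (1 - x) ≤ 1 / 4 := by nlinarith [sq_nonneg (1 - 2 * x)]
  have key : x * (1 - x) * (1 + 3 * (n - 2) * (x * (1 - x))) ≤ n := by
    nlinarith [mul_le_mul_of_nonneg_left (mul_le_mul ht ht ht0 (by norm_num)) (Nat.cast_nonneg n)]
  rw [div_le_div_iff₀ (by positivity) (by positivity)]
  nlinarith [mul_le_mul_of_nonneg_left key (by positivity : (0 : ℝ) ≤ n ^ 3)]

end bernsteinPolynomial

theorem bernsteinApprox_eq_sum (f : ℝ → ℝ) (n : ℕ) (x : ℝ) :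
    bernsteinApprox f n x =
      ∑ k ∈ range (n + 1), f (k / n) * (bernsteinPolynomial ℝ n k).eval x := by
  simp only [bernsteinApprox, bernsteinPolynomial, eval_mul, eval_natCast, eval_pow, eval_X,
    eval_sub, eval_one, mul_assoc]

theorem bernsteinApprox_add (f g : ℝ → ℝ) (n : ℕ) (x : ℝ) :
    bernsteinApprox (fun t => f t + g t) n x = bernsteinApprox f n x + bernsteinApprox g n x := by
  simp only [bernsteinApprox_eq_sum, add_mul, sum_add_distrib]

theorem bernsteinApprox_quadratic {n : ℕ} (hn : n ≠ 0) (a b c x : ℝ) :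
    bernsteinApprox (fun t => a + b * (t - x) + c * (t - x) ^ 2) n x =
      a + c * (x * (1 - x) / n) := by
  simp only [bernsteinApprox_eq_sum, add_mul, sum_add_distrib, mul_assoc, ← mul_sum,
    bernsteinPolynomial.sum_eval ℝ, bernsteinPolynomial.sum_div_sub_mul_eval hn,
    bernsteinPolynomial.sum_div_sub_sq_mul_eval hn]
  ring

theorem abs_bernsteinApprox_le_of_abs_le {g : ℝ → ℝ} {x : ℝ} (hx : x ∈ Set.Icc 0 1) {n : ℕ}
    (hn : n ≠ 0) {a C : ℝ} (hC : 0 ≤ C) (hg : ∀ t ∈ Set.Icc 0 1, |g t| ≤ a * (t - x) ^ 2 + C * (t - x) ^ 4) :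
    |bernsteinApprox g n x| ≤ a * (x * (1 - x) / n) + C * (1 / n ^ 2) := by
  have hnode : ∀ k ∈ range (n + 1), (k : ℝ) / n ∈ Set.Icc 0 1 := fun k hk =>
    ⟨by positivity,
      div_le_one_of_le₀ (by exact_mod_cast mem_range_succ_iff.1 hk) (Nat.cast_nonneg n)⟩
  calc |bernsteinApprox g n x|
      ≤ ∑ k ∈ range (n + 1), |g (k / n)| * (bernsteinPolynomial ℝ n k).eval x := by
        rw [bernsteinApprox_eq_sum]
        refine (abs_sum_le_sum_abs _ _).trans_eq (sum_congr rfl fun k _ => ?_)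
        rw [abs_mul, abs_of_nonneg (bernsteinPolynomial.eval_nonneg hx)]
    _ ≤ ∑ k ∈ range (n + 1), (a * ((k : ℝ) / n - x) ^ 2 + C * ((k : ℝ) / n - x) ^ 4) *
          (bernsteinPolynomial ℝ n k).eval x :=
        sum_le_sum fun k hk => mul_le_mul_of_nonneg_right (hg _ (hnode k hk))
          (bernsteinPolynomial.eval_nonneg hx)
    _ = a * (x * (1 - x) / n) +
          C * ∑ k ∈ range (n + 1), ((k : ℝ) / n - x) ^ 4 * (bernsteinPolynomial ℝ n k).eval x := by
        simp only [add_mul, sum_add_distrib, mul_assoc, ← mul_sum,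
          bernsteinPolynomial.sum_div_sub_sq_mul_eval hn]
    _ ≤ a * (x * (1 - x) / n) + C * (1 / n ^ 2) := by
        gcongr
        exact bernsteinPolynomial.sum_div_sub_pow_four_mul_eval_le hn hx

theorem taylorWithinEval_two_univ (f : ℝ → ℝ) (x₀ x : ℝ) :
    taylorWithinEval f 2 Set.univ x₀ x =
      f x₀ + deriv f x₀ * (x - x₀) + deriv (deriv f) x₀ / 2 * (x - x₀) ^ 2 := by
  simp only [taylor_within_apply, sum_range_succ, sum_range_zero, iteratedDerivWithin_univ,
    iteratedDeriv_succ, iteratedDeriv_zero, smul_eq_mul]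
  norm_num [Nat.factorial]
  ring

theorem exists_abs_le_sq_add_pow_four_of_isLittleO {g : ℝ → ℝ} {x : ℝ}
    (hg : g =o[𝓝 x] fun t => (t - x) ^ 2)
    {s : Set ℝ} {M : ℝ} (hM : ∀ t ∈ s, |g t| ≤ M) {ε : ℝ} (hε : 0 < ε) :
    ∃ C, 0 ≤ C ∧ ∀ t ∈ s, |g t| ≤ ε * (t - x) ^ 2 + C * (t - x) ^ 4 := by
  obtain ⟨δ, hδ, hnear⟩ := Metric.eventually_nhds_iff.1 (hg.def hε)
  refine ⟨|M| / δ ^ 4, by positivity, fun t ht => ?_⟩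
  rcases lt_or_ge (dist t x) δ with hlt | hge
  · have h := hnear hlt
    simp only [Real.norm_eq_abs, abs_pow, sq_abs] at h
    have : 0 ≤ |M| / δ ^ 4 * (t - x) ^ 4 := by positivity
    linarith
  · rw [Real.dist_eq] at hge
    have hδ4 : δ ^ 4 ≤ (t - x) ^ 4 := by
      simpa only [pow_abs, Even.pow_abs ⟨2, rfl⟩] using pow_le_pow_left₀ hδ.le hge 4
    have : |M| ≤ |M| / δ ^ 4 * (t - x) ^ 4 := by
      rw [div_mul_eq_mul_div, le_div_iff₀ (by positivity)]
      exact mul_le_mul_of_nonneg_left hδ4 (abs_nonneg M)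
    have : 0 ≤ ε * (t - x) ^ 2 := by positivity
    linarith [hM t ht, le_abs_self M]

theorem tendsto_mul_bernsteinApprox_of_isLittleO {g : ℝ → ℝ} {x : ℝ} (hx : x ∈ Set.Icc 0 1)
    (hg : g =o[𝓝 x] fun t => (t - x) ^ 2) (hcont : ContinuousOn g (Set.Icc 0 1)) :
    Tendsto (fun n : ℕ => n * bernsteinApprox g n x) atTop (𝓝 0) := by
  obtain ⟨M, hM⟩ := isCompact_Icc.exists_bound_of_continuousOn hcont
  rw [NormedAddGroup.tendsto_nhds_zero]
  intro ε hε
  obtain ⟨C, hC, hgC⟩ := exists_abs_le_sq_add_pow_four_of_isLittleO hg hM (half_pos hε)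
  have hsmall : ∀ᶠ n : ℕ in atTop, C / n < ε / 2 :=
    (tendsto_const_div_atTop_nhds_zero_nat C).eventually (gt_mem_nhds (half_pos hε))
  filter_upwards [hsmall, eventually_ne_atTop 0] with n hCn hn
  have hn0 : (0 : ℝ) < n := by positivity
  have ht : x * (1 - x) ≤ 1 := by nlinarith [hx.1, hx.2]
  have hbound := abs_bernsteinApprox_le_of_abs_le hx hn hC hgC
  rw [Real.norm_eq_abs, abs_mul, Nat.abs_cast]
  calc (n : ℝ) * |bernsteinApprox g n x|
      ≤ n * (ε / 2 * (x * (1 - x) / n) + C * (1 / n ^ 2)) := by gcongr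
    _ = ε / 2 * (x * (1 - x)) + C / n := by field_simp
    _ < ε := by nlinarith

/-- Voronovskaya's theorem. -/
theorem voronovskaya (f : ℝ → ℝ) (hf : ContDiff ℝ 2 f)
    (x : ℝ) (hx : x ∈ Set.Icc (0 : ℝ) 1) :
    Filter.Tendsto (fun n : ℕ => (n : ℝ) * (bernsteinApprox f n x - f x))
      Filter.atTop (nhds (x * (1 - x) * deriv (deriv f) x / 2)) := by
  set P : ℝ → ℝ := fun t => f x + deriv f x * (t - x) + deriv (deriv f) x / 2 * (t - x) ^ 2
  have hrem : (fun t => f t - P t) =o[𝓝 x] fun t => (t - x) ^ 2 := by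
    simpa only [taylorWithinEval_two_univ] using taylor_isLittleO_univ (n := 2) hf
  have hcont : ContinuousOn (fun t => f t - P t) (Set.Icc 0 1) :=
    (hf.continuous.sub (by fun_prop)).continuousOn
  have hlim := (tendsto_mul_bernsteinApprox_of_isLittleO hx hrem hcont).const_add
    (x * (1 - x) * deriv (deriv f) x / 2)
  rw [add_zero] at hlim
  refine hlim.congr' ?_
  filter_upwards [eventually_ne_atTop 0] with n hn
  have hsplit : bernsteinApprox f n x =
      bernsteinApprox P n x + bernsteinApprox (fun t => f t - P t) n x := by
    rw [← bernsteinApprox_add]; simp only [add_sub_cancel]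
  rw [hsplit, bernsteinApprox_quadratic hn]
  field_simp
  ring
end

section
/- Let {φₖ}_{k=0}^n and {ψⱼ}_{j=0}^n be nonnegative bases for degree-n polynomials on [a,b] such that ψⱼ = ∑_{k=0}^n Mⱼₖ φₖ with all Mⱼₖ ≥ 0. Then for any polynomial p with p = ∑ⱼ dⱼ ψⱼ = ∑ₖ cₖ φₖ where cₖ = ∑ⱼ dⱼ Mⱼₖ, the condition numbers satisfy ∑ₖ |cₖ φₖ(x)| ≤ ∑ⱼ |dⱼ ψⱼ(x)| for all x ∈ [a,b]. -/
/-!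
With `wⱼₖ = Mⱼₖ φₖ(x) ≥ 0` we have `cₖ φₖ(x) = ∑ⱼ dⱼ wⱼₖ` and `ψⱼ(x) = ∑ₖ wⱼₖ`, so the claim is
the triangle inequality `|∑ⱼ dⱼ wⱼₖ| ≤ ∑ⱼ |dⱼ| wⱼₖ` summed over `k`, after swapping the sums.
-/

open Finset

theorem sum_abs_sum_mul_le_sum_abs_mul_sum {R ι κ : Type*} [Ring R] [LinearOrder R]
    [IsStrictOrderedRing R] (s : Finset ι) (t : Finset κ) (d : ι → R) (w : ι → κ → R)
    (hw : ∀ j ∈ s, ∀ k ∈ t, 0 ≤ w j k) :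
    ∑ k ∈ t, |∑ j ∈ s, d j * w j k| ≤ ∑ j ∈ s, |d j * ∑ k ∈ t, w j k| :=
  calc ∑ k ∈ t, |∑ j ∈ s, d j * w j k|
      ≤ ∑ k ∈ t, ∑ j ∈ s, |d j| * w j k := by
        refine sum_le_sum fun k hk => (abs_sum_le_sum_abs _ _).trans_eq ?_
        refine sum_congr rfl fun j hj => ?_
        rw [abs_mul, abs_of_nonneg (hw j hj k hk)]
    _ = ∑ j ∈ s, |d j| * ∑ k ∈ t, w j k := by
        rw [sum_comm]
        simp only [mul_sum]
    _ ≤ ∑ j ∈ s, |d j * ∑ k ∈ t, w j k| :=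
        sum_le_sum fun j _ =>
          abs_mul (d j) _ ▸ mul_le_mul_of_nonneg_left (le_abs_self _) (abs_nonneg _)

theorem condition_number_comparison_general
    (n : ℕ) (a b : ℝ) (φ ψ : ℕ → ℝ → ℝ) (M : ℕ → ℕ → ℝ)
    (hφ : ∀ k, k ≤ n → ∀ x ∈ Set.Icc a b, 0 ≤ φ k x)
    (hM : ∀ j k, j ≤ n → k ≤ n → 0 ≤ M j k)
    (hMψ : ∀ j, j ≤ n → ∀ x ∈ Set.Icc a b,
      ψ j x = ∑ k ∈ Finset.range (n + 1), M j k * φ k x)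
    (d c : ℕ → ℝ)
    (hc : ∀ k, k ≤ n → c k = ∑ j ∈ Finset.range (n + 1), d j * M j k) :
    ∀ x ∈ Set.Icc a b,
      ∑ k ∈ Finset.range (n + 1), |c k * φ k x| ≤
        ∑ j ∈ Finset.range (n + 1), |d j * ψ j x| := by
  intro x hx
  have hrange : ∀ {i}, i ∈ range (n + 1) → i ≤ n := fun hi =>
    Nat.lt_succ_iff.mp (mem_range.mp hi)
  calc ∑ k ∈ range (n + 1), |c k * φ k x|
      = ∑ k ∈ range (n + 1), |∑ j ∈ range (n + 1), d j * (M j k * φ k x)| := by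
        refine sum_congr rfl fun k hk => ?_
        rw [hc k (hrange hk), sum_mul]
        simp only [mul_assoc]
    _ ≤ ∑ j ∈ range (n + 1), |d j * ∑ k ∈ range (n + 1), M j k * φ k x| :=
        sum_abs_sum_mul_le_sum_abs_mul_sum _ _ d _ fun j hj k hk =>
          mul_nonneg (hM j k (hrange hj) (hrange hk)) (hφ k (hrange hk) x hx)
    _ = ∑ j ∈ range (n + 1), |d j * ψ j x| :=
        sum_congr rfl fun j hj => by rw [hMψ j (hrange hj) x hx]

theorem condition_number_comparison
    (n : ℕ) (a b : ℝ) (φ ψ : ℕ → ℝ → ℝ) (M : ℕ → ℕ → ℝ)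
    (hφ : ∀ k, k ≤ n → ∀ x ∈ Set.Icc a b, 0 ≤ φ k x)
    (hψ : ∀ j, j ≤ n → ∀ x ∈ Set.Icc a b, 0 ≤ ψ j x)
    (hM : ∀ j k, j ≤ n → k ≤ n → 0 ≤ M j k)
    (hMψ : ∀ j, j ≤ n → ∀ x ∈ Set.Icc a b,
      ψ j x = ∑ k ∈ Finset.range (n + 1), M j k * φ k x)
    (d c : ℕ → ℝ)
    (hc : ∀ k, k ≤ n → c k = ∑ j ∈ Finset.range (n + 1), d j * M j k) :
    ∀ x ∈ Set.Icc a b,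
      ∑ k ∈ Finset.range (n + 1), |c k * φ k x| ≤
        ∑ j ∈ Finset.range (n + 1), |d j * ψ j x| :=
  condition_number_comparison_general n a b φ ψ M hφ hM hMψ d c hc
end
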